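/- arXiv:math/0609777 — 2 statements merged into one kernel-verified Lean document; each statement's English description precedes it below -/
import Mathlib

section
/- For every integer j ≥ 1 and every smooth function u : ℝ × ℝ² → ℝ, the operators N_j satisfy the commutator identity [X₂, N_j] u = − t^k · N_{j−1}(R u) pointwise on ℝ × ℝ². -/
noncomputable section

/-- Partial derivative in `t` of a function on `ℝ × ℝ²`. -/
def pt (u : ℝ × ℝ × ℝ → ℝ) (p : ℝ × ℝ × ℝ) : ℝ :=
  deriv (fun s => u (s, p.2.1, p.2.2)) p.1

/-- Partial derivative in `x₁`. -/
def px1 (u : ℝ × ℝ × ℝ → ℝ) (p : ℝ × ℝ × ℝ) : ℝ :=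
  deriv (fun s => u (p.1, s, p.2.2)) p.2.1

/-- Partial derivative in `x₂`. -/
def px2 (u : ℝ × ℝ × ℝ → ℝ) (p : ℝ × ℝ × ℝ) : ℝ :=
  deriv (fun s => u (p.1, p.2.1, s)) p.2.2

/-- `X₁ u = ∂ₜ u`. -/
def X1 (u : ℝ × ℝ × ℝ → ℝ) : ℝ × ℝ × ℝ → ℝ := pt u

/-- `R u = x₁ ∂_{x₁} u + x₂ ∂_{x₂} u`. -/
def Rop (u : ℝ × ℝ × ℝ → ℝ) : ℝ × ℝ × ℝ → ℝ :=
  fun p => p.2.1 * px1 u p + p.2.2 * px2 u p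

/-- `X₂ u = x₁ ∂_{x₂} u - x₂ ∂_{x₁} u + tᵏ · R u`. -/
def X2 (k : ℕ) (u : ℝ × ℝ × ℝ → ℝ) : ℝ × ℝ × ℝ → ℝ :=
  fun p => p.2.1 * px2 u p - p.2.2 * px1 u p + p.1 ^ k * Rop u p

/-- `M u = (t/k) ∂ₜ u`. -/
def M (k : ℕ) (u : ℝ × ℝ × ℝ → ℝ) : ℝ × ℝ × ℝ → ℝ :=
  fun p => (p.1 / (k : ℝ)) * pt u p

end

noncomputable section

/-- `a j ℓ` is the coefficient of `T^(j-ℓ)` in `Q^(j+1)`, where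
`Q = T/(eᵀ - 1)` is the Bernoulli generating power series (with `B₁ = -1/2`). -/
def bernCoef (j ℓ : ℕ) : ℚ :=
  PowerSeries.coeff (R := ℚ) (j - ℓ) ((bernoulliPowerSeries ℚ) ^ (j + 1))

/-- `N_j u = Σ_{j'=0}^{j} a^j_{j'} · M^{j'} u / j'!`. -/
def Nop (k j : ℕ) (u : ℝ × ℝ × ℝ → ℝ) : ℝ × ℝ × ℝ → ℝ :=
  fun p => ∑ j' ∈ Finset.range (j + 1),
    ((bernCoef j j' : ℝ) / (Nat.factorial j' : ℝ)) * ((M k)^[j'] u p)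

end
noncomputable section
namespace BXN

variable {u w g : ℝ × ℝ × ℝ → ℝ} {p : ℝ × ℝ × ℝ} {k : ℕ}

lemma pt_eq (h : DifferentiableAt ℝ u p) : pt u p = fderiv ℝ u p (1, 0, 0) := by
  have hc : HasDerivAt (fun s : ℝ => ((s, p.2.1, p.2.2) : ℝ × ℝ × ℝ)) (1, 0, 0) p.1 := by
    simpa [Prod.mk_zero_zero] using (hasDerivAt_id p.1).prodMk (hasDerivAt_const p.1 ((p.2.1, p.2.2) : ℝ × ℝ))
  have h2 := h.hasFDerivAt.comp_hasDerivAt p.1 hc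
  exact h2.deriv

lemma px1_eq (h : DifferentiableAt ℝ u p) : px1 u p = fderiv ℝ u p (0, 1, 0) := by
  have hc : HasDerivAt (fun s : ℝ => ((p.1, s, p.2.2) : ℝ × ℝ × ℝ)) (0, 1, 0) p.2.1 := by
    simpa using (hasDerivAt_const p.2.1 p.1).prodMk
      ((hasDerivAt_id p.2.1).prodMk (hasDerivAt_const p.2.1 p.2.2))
  have h2 := h.hasFDerivAt.comp_hasDerivAt p.2.1 hc
  exact h2.deriv

lemma px2_eq (h : DifferentiableAt ℝ u p) : px2 u p = fderiv ℝ u p (0, 0, 1) := by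
  have hc : HasDerivAt (fun s : ℝ => ((p.1, p.2.1, s) : ℝ × ℝ × ℝ)) (0, 0, 1) p.2.2 := by
    simpa using (hasDerivAt_const p.2.2 p.1).prodMk
      ((hasDerivAt_const p.2.2 p.2.1).prodMk (hasDerivAt_id p.2.2))
  have h2 := h.hasFDerivAt.comp_hasDerivAt p.2.2 hc
  exact h2.deriv

lemma smooth_pt (hu : ContDiff ℝ (⊤ : ℕ∞) u) : ContDiff ℝ (⊤ : ℕ∞) (pt u) := by
  have : pt u = fun q => fderiv ℝ u q (1, 0, 0) :=
    funext fun q => pt_eq (hu.differentiable (by simp) q)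
  rw [this]; exact (hu.fderiv_right (by simp)).clm_apply contDiff_const

lemma smooth_px1 (hu : ContDiff ℝ (⊤ : ℕ∞) u) : ContDiff ℝ (⊤ : ℕ∞) (px1 u) := by
  have : px1 u = fun q => fderiv ℝ u q (0, 1, 0) :=
    funext fun q => px1_eq (hu.differentiable (by simp) q)
  rw [this]; exact (hu.fderiv_right (by simp)).clm_apply contDiff_const

lemma smooth_px2 (hu : ContDiff ℝ (⊤ : ℕ∞) u) : ContDiff ℝ (⊤ : ℕ∞) (px2 u) := by
  have : px2 u = fun q => fderiv ℝ u q (0, 0, 1) :=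
    funext fun q => px2_eq (hu.differentiable (by simp) q)
  rw [this]; exact (hu.fderiv_right (by simp)).clm_apply contDiff_const

lemma symm2 (hu : ContDiff ℝ (⊤ : ℕ∞) u) (v v' : ℝ × ℝ × ℝ) :
    fderiv ℝ (fun q => fderiv ℝ u q v) p v' = fderiv ℝ (fun q => fderiv ℝ u q v') p v := by
  have hd : DifferentiableAt ℝ (fderiv ℝ u) p :=
    ((hu.fderiv_right (m := (⊤ : ℕ∞)) (by simp)).differentiable (by simp)) p
  have e1 : fderiv ℝ (fun q => fderiv ℝ u q v) p v' = fderiv ℝ (fderiv ℝ u) p v' v := by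
    rw [fderiv_clm_apply hd (differentiableAt_const v)]; simp
  have e2 : fderiv ℝ (fun q => fderiv ℝ u q v') p v = fderiv ℝ (fderiv ℝ u) p v v' := by
    rw [fderiv_clm_apply hd (differentiableAt_const v')]; simp
  rw [e1, e2]
  exact (hu.contDiffAt.isSymmSndFDerivAt (by rw [minSmoothness_of_isRCLikeNormedField]; exact WithTop.coe_le_coe.mpr le_top)) v' v

lemma pt_px1_comm (hu : ContDiff ℝ (⊤ : ℕ∞) u) : pt (px1 u) p = px1 (pt u) p := by
  have hx : px1 u = fun q => fderiv ℝ u q (0, 1, 0) :=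
    funext fun q => px1_eq (hu.differentiable (by simp) q)
  have ht : pt u = fun q => fderiv ℝ u q (1, 0, 0) :=
    funext fun q => pt_eq (hu.differentiable (by simp) q)
  rw [pt_eq ((smooth_px1 hu).differentiable (by simp) p),
    px1_eq ((smooth_pt hu).differentiable (by simp) p), hx, ht]
  exact symm2 hu _ _

lemma pt_px2_comm (hu : ContDiff ℝ (⊤ : ℕ∞) u) : pt (px2 u) p = px2 (pt u) p := by
  have hx : px2 u = fun q => fderiv ℝ u q (0, 0, 1) :=
    funext fun q => px2_eq (hu.differentiable (by simp) q)
  have ht : pt u = fun q => fderiv ℝ u q (1, 0, 0) :=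
    funext fun q => pt_eq (hu.differentiable (by simp) q)
  rw [pt_eq ((smooth_px2 hu).differentiable (by simp) p),
    px2_eq ((smooth_pt hu).differentiable (by simp) p), hx, ht]
  exact symm2 hu _ _

end BXN
end
noncomputable section
namespace BXN
variable {u w g : ℝ × ℝ × ℝ → ℝ} {p : ℝ × ℝ × ℝ} {k : ℕ}

lemma diff_slice_t (hg : ContDiff ℝ (⊤ : ℕ∞) g) (a b t : ℝ) :
    DifferentiableAt ℝ (fun s => g (s, a, b)) t :=
  ((hg.comp (contDiff_id.prodMk contDiff_const)).differentiable (by simp)) t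

lemma diff_slice_x1 (hg : ContDiff ℝ (⊤ : ℕ∞) g) (t b x : ℝ) :
    DifferentiableAt ℝ (fun s => g (t, s, b)) x :=
  ((hg.comp (contDiff_const.prodMk (contDiff_id.prodMk contDiff_const))).differentiable (by simp)) x

lemma diff_slice_x2 (hg : ContDiff ℝ (⊤ : ℕ∞) g) (t a y : ℝ) :
    DifferentiableAt ℝ (fun s => g (t, a, s)) y :=
  ((hg.comp (contDiff_const.prodMk (contDiff_const.prodMk contDiff_id))).differentiable (by simp)) y

lemma hds_t (hg : ContDiff ℝ (⊤ : ℕ∞) g) (p : ℝ × ℝ × ℝ) :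
    HasDerivAt (fun s => g (s, p.2.1, p.2.2)) (pt g p) p.1 :=
  (diff_slice_t hg p.2.1 p.2.2 p.1).hasDerivAt

lemma hds_x1 (hg : ContDiff ℝ (⊤ : ℕ∞) g) (p : ℝ × ℝ × ℝ) :
    HasDerivAt (fun s => g (p.1, s, p.2.2)) (px1 g p) p.2.1 :=
  (diff_slice_x1 hg p.1 p.2.2 p.2.1).hasDerivAt

lemma hds_x2 (hg : ContDiff ℝ (⊤ : ℕ∞) g) (p : ℝ × ℝ × ℝ) :
    HasDerivAt (fun s => g (p.1, p.2.1, s)) (px2 g p) p.2.2 :=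
  (diff_slice_x2 hg p.1 p.2.1 p.2.2).hasDerivAt

lemma smooth_M (hw : ContDiff ℝ (⊤ : ℕ∞) w) : ContDiff ℝ (⊤ : ℕ∞) (M k w) :=
  (contDiff_fst.div_const _).mul (smooth_pt hw)

lemma smooth_Mn (hw : ContDiff ℝ (⊤ : ℕ∞) w) (n : ℕ) : ContDiff ℝ (⊤ : ℕ∞) ((M k)^[n] w) := by
  induction n with
  | zero => exact hw
  | succ n ih => rw [Function.iterate_succ_apply']; exact smooth_M ih

lemma smooth_R (hw : ContDiff ℝ (⊤ : ℕ∞) w) : ContDiff ℝ (⊤ : ℕ∞) (Rop w) :=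
  ((contDiff_fst.comp contDiff_snd).mul (smooth_px1 hw)).add
    ((contDiff_snd.comp contDiff_snd).mul (smooth_px2 hw))

lemma smooth_X2 (hw : ContDiff ℝ (⊤ : ℕ∞) w) : ContDiff ℝ (⊤ : ℕ∞) (X2 k w) :=
  (((contDiff_fst.comp contDiff_snd).mul (smooth_px2 hw)).sub
    ((contDiff_snd.comp contDiff_snd).mul (smooth_px1 hw))).add
    ((contDiff_fst.pow k).mul (smooth_R hw))

lemma px1_M (hw : ContDiff ℝ (⊤ : ℕ∞) w) :
    px1 (M k w) p = p.1 / (k : ℝ) * px1 (pt w) p := by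
  exact ((hds_x1 (smooth_pt hw) p).const_mul (p.1 / (k : ℝ))).deriv

lemma px2_M (hw : ContDiff ℝ (⊤ : ℕ∞) w) :
    px2 (M k w) p = p.1 / (k : ℝ) * px2 (pt w) p := by
  exact ((hds_x2 (smooth_pt hw) p).const_mul (p.1 / (k : ℝ))).deriv

lemma pt_R (hw : ContDiff ℝ (⊤ : ℕ∞) w) :
    pt (Rop w) p = p.2.1 * pt (px1 w) p + p.2.2 * pt (px2 w) p := by
  exact (((hds_t (smooth_px1 hw) p).const_mul p.2.1).add
    ((hds_t (smooth_px2 hw) p).const_mul p.2.2)).deriv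

lemma pt_X2 (hw : ContDiff ℝ (⊤ : ℕ∞) w) :
    pt (X2 k w) p = (p.2.1 * pt (px2 w) p - p.2.2 * pt (px1 w) p) +
      ((k : ℝ) * p.1 ^ (k - 1) * (p.2.1 * px1 w p + p.2.2 * px2 w p) +
        p.1 ^ k * (p.2.1 * pt (px1 w) p + p.2.2 * pt (px2 w) p)) := by
  have h2 := (hds_t (smooth_px2 hw) p).const_mul p.2.1
  have h1 := (hds_t (smooth_px1 hw) p).const_mul p.2.2
  have hin := ((hds_t (smooth_px1 hw) p).const_mul p.2.1).add
    ((hds_t (smooth_px2 hw) p).const_mul p.2.2)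
  have hmul := (hasDerivAt_pow k p.1).mul hin
  exact ((h2.sub h1).add hmul).deriv

end BXN
end
noncomputable section
namespace BXN
variable {u w g : ℝ × ℝ × ℝ → ℝ} {p : ℝ × ℝ × ℝ} {k : ℕ}

lemma bracket_X2_M (hk : 1 ≤ k) (hw : ContDiff ℝ (⊤ : ℕ∞) w) (p : ℝ × ℝ × ℝ) :
    X2 k (M k w) p = M k (X2 k w) p - p.1 ^ k * Rop w p := by
  have hk0 : (k : ℝ) ≠ 0 := Nat.cast_ne_zero.mpr (by omega)
  have hpow : p.1 ^ k = p.1 ^ (k - 1) * p.1 := by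
    rw [← pow_succ, Nat.sub_add_cancel hk]
  show p.2.1 * px2 (M k w) p - p.2.2 * px1 (M k w) p + p.1 ^ k * Rop (M k w) p = _
  show _ = p.1 / (k : ℝ) * pt (X2 k w) p - p.1 ^ k * Rop w p
  show p.2.1 * px2 (M k w) p - p.2.2 * px1 (M k w) p +
      p.1 ^ k * (p.2.1 * px1 (M k w) p + p.2.2 * px2 (M k w) p) =
      p.1 / (k : ℝ) * pt (X2 k w) p -
      p.1 ^ k * (p.2.1 * px1 w p + p.2.2 * px2 w p)
  rw [px1_M hw, px2_M hw, pt_X2 hw, ← pt_px1_comm hw, ← pt_px2_comm hw, hpow]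
  field_simp
  ring
end BXN
end
noncomputable section
namespace BXN
variable {u w g : ℝ × ℝ × ℝ → ℝ} {p : ℝ × ℝ × ℝ} {k : ℕ}

lemma MR_comm (hw : ContDiff ℝ (⊤ : ℕ∞) w) (p : ℝ × ℝ × ℝ) :
    M k (Rop w) p = Rop (M k w) p := by
  show p.1 / (k : ℝ) * pt (Rop w) p = p.2.1 * px1 (M k w) p + p.2.2 * px2 (M k w) p
  rw [pt_R hw, px1_M hw, px2_M hw, ← pt_px1_comm hw, ← pt_px2_comm hw]
  ring

lemma MRn (hu : ContDiff ℝ (⊤ : ℕ∞) u) (n : ℕ) :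
    (M k)^[n] (Rop u) = Rop ((M k)^[n] u) := by
  induction n with
  | zero => rfl
  | succ n ih =>
    rw [Function.iterate_succ_apply', Function.iterate_succ_apply', ih]
    exact funext fun p => MR_comm (smooth_Mn hu n) p

lemma px1_sum {s : Finset ℕ} {f : ℕ → ℝ × ℝ × ℝ → ℝ} (hf : ∀ i ∈ s, ContDiff ℝ (⊤ : ℕ∞) (f i))
    (c : ℕ → ℝ) :
    px1 (fun q => ∑ i ∈ s, c i * f i q) p = ∑ i ∈ s, c i * px1 (f i) p :=
  (HasDerivAt.fun_sum fun i hi => (hds_x1 (hf i hi) p).const_mul (c i)).deriv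

lemma px2_sum {s : Finset ℕ} {f : ℕ → ℝ × ℝ × ℝ → ℝ} (hf : ∀ i ∈ s, ContDiff ℝ (⊤ : ℕ∞) (f i))
    (c : ℕ → ℝ) :
    px2 (fun q => ∑ i ∈ s, c i * f i q) p = ∑ i ∈ s, c i * px2 (f i) p :=
  (HasDerivAt.fun_sum fun i hi => (hds_x2 (hf i hi) p).const_mul (c i)).deriv

lemma choose_sum (n : ℕ) (r : ℕ → ℝ) :
    ∑ i ∈ Finset.range (n + 1), ((n + 1).choose i : ℝ) * r i =
      ∑ i ∈ Finset.range n, (n.choose i : ℝ) * r i +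
      ∑ i ∈ Finset.range n, (n.choose i : ℝ) * r (i + 1) + r n := by
  have A := Finset.sum_range_succ' (fun i => ((n + 1).choose i : ℝ) * r i) n
  have B := Finset.sum_range_succ' (fun i => (n.choose i : ℝ) * r i) n
  have C := Finset.sum_range_succ (fun i => (n.choose i : ℝ) * r i) n
  simp only [Nat.choose_zero_right, Nat.cast_one, one_mul, Nat.choose_self] at A B C
  rw [A]
  have hcc : ∀ i ∈ Finset.range n, ((n + 1).choose (i + 1) : ℝ) * r (i + 1) =
      (n.choose i : ℝ) * r (i + 1) + (n.choose (i + 1) : ℝ) * r (i + 1) := by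
    intro i _
    rw [Nat.choose_succ_succ]
    push_cast
    ring
  rw [Finset.sum_congr rfl hcc, Finset.sum_add_distrib]
  have D : ∑ i ∈ Finset.range n, (n.choose (i + 1) : ℝ) * r (i + 1) + r 0 =
      ∑ i ∈ Finset.range n, (n.choose i : ℝ) * r i + r n := by
    rw [← B, C]
  linarith [D]

lemma star (hk : 1 ≤ k) (hu : ContDiff ℝ (⊤ : ℕ∞) u) (n : ℕ) : ∀ p : ℝ × ℝ × ℝ,
    X2 k ((M k)^[n] u) p = (M k)^[n] (X2 k u) p -
      p.1 ^ k * ∑ i ∈ Finset.range n, (n.choose i : ℝ) * Rop ((M k)^[i] u) p := by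
  have hk0 : (k : ℝ) ≠ 0 := Nat.cast_ne_zero.mpr (by omega)
  induction n with
  | zero => intro p; simp
  | succ n ih =>
    intro p
    have hMn : ContDiff ℝ (⊤ : ℕ∞) ((M k)^[n] u) := smooth_Mn hu n
    have hpow : p.1 ^ k = p.1 ^ (k - 1) * p.1 := by
      rw [← pow_succ, Nat.sub_add_cancel hk]
    have h1 : X2 k ((M k)^[n + 1] u) p =
        M k (X2 k ((M k)^[n] u)) p - p.1 ^ k * Rop ((M k)^[n] u) p := by
      rw [Function.iterate_succ_apply']
      exact bracket_X2_M hk hMn p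
    have hfun : X2 k ((M k)^[n] u) = fun q => (M k)^[n] (X2 k u) q -
        q.1 ^ k * ∑ i ∈ Finset.range n, (n.choose i : ℝ) * Rop ((M k)^[i] u) q :=
      funext fun q => ih q
    rw [hfun] at h1
    -- derivative of the inner function in t
    have hS : HasDerivAt
        (fun s => ∑ i ∈ Finset.range n, (n.choose i : ℝ) * Rop ((M k)^[i] u) (s, p.2.1, p.2.2))
        (∑ i ∈ Finset.range n, (n.choose i : ℝ) * pt (Rop ((M k)^[i] u)) p) p.1 :=
      HasDerivAt.fun_sum fun i _ => (hds_t (smooth_R (smooth_Mn hu i)) p).const_mul _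
    have hF : HasDerivAt (fun s => (M k)^[n] (X2 k u) (s, p.2.1, p.2.2))
        (pt ((M k)^[n] (X2 k u)) p) p.1 := hds_t (smooth_Mn (smooth_X2 hu) n) p
    have hpt : pt (fun q => (M k)^[n] (X2 k u) q -
          q.1 ^ k * ∑ i ∈ Finset.range n, (n.choose i : ℝ) * Rop ((M k)^[i] u) q) p =
        pt ((M k)^[n] (X2 k u)) p -
          ((k : ℝ) * p.1 ^ (k - 1) *
              (∑ i ∈ Finset.range n, (n.choose i : ℝ) * Rop ((M k)^[i] u) p) +
            p.1 ^ k * ∑ i ∈ Finset.range n, (n.choose i : ℝ) * pt (Rop ((M k)^[i] u)) p) :=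
      (hF.sub ((hasDerivAt_pow k p.1).mul hS)).deriv
    have e1 : p.1 / (k : ℝ) *
        ∑ i ∈ Finset.range n, (n.choose i : ℝ) * pt (Rop ((M k)^[i] u)) p =
        ∑ i ∈ Finset.range n, (n.choose i : ℝ) * Rop ((M k)^[i + 1] u) p := by
      rw [Finset.mul_sum]
      refine Finset.sum_congr rfl fun i _ => ?_
      have h2 : M k (Rop ((M k)^[i] u)) p = Rop ((M k)^[i + 1] u) p := by
        rw [Function.iterate_succ_apply']
        exact MR_comm (smooth_Mn hu i) p
      calc p.1 / (k : ℝ) * ((n.choose i : ℝ) * pt (Rop ((M k)^[i] u)) p)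
          = (n.choose i : ℝ) * (p.1 / (k : ℝ) * pt (Rop ((M k)^[i] u)) p) := by ring
        _ = (n.choose i : ℝ) * Rop ((M k)^[i + 1] u) p := by
            rw [show p.1 / (k : ℝ) * pt (Rop ((M k)^[i] u)) p
                = M k (Rop ((M k)^[i] u)) p from rfl, h2]
    have hMG : M k (fun q => (M k)^[n] (X2 k u) q -
          q.1 ^ k * ∑ i ∈ Finset.range n, (n.choose i : ℝ) * Rop ((M k)^[i] u) q) p =
        p.1 / (k : ℝ) * pt ((M k)^[n] (X2 k u)) p -
          p.1 ^ k * (∑ i ∈ Finset.range n, (n.choose i : ℝ) * Rop ((M k)^[i] u) p) -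
          p.1 ^ k * ∑ i ∈ Finset.range n, (n.choose i : ℝ) * Rop ((M k)^[i + 1] u) p := by
      show p.1 / (k : ℝ) * pt _ p = _
      rw [hpt, ← e1, hpow]
      field_simp
      ring
    have hsucc : (M k)^[n + 1] (X2 k u) p =
        p.1 / (k : ℝ) * pt ((M k)^[n] (X2 k u)) p := by
      rw [Function.iterate_succ_apply']
      rfl
    rw [h1, hMG, hsucc, choose_sum n (fun i => Rop ((M k)^[i] u) p)]
    ring
end BXN
end
noncomputable section
namespace BXN

lemma coeff_exp_sub_one (b : ℕ) :
    PowerSeries.coeff (R := ℚ) b (PowerSeries.exp ℚ - 1) =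
      if b = 0 then 0 else ((b.factorial : ℚ))⁻¹ := by
  rw [map_sub, PowerSeries.coeff_exp, PowerSeries.coeff_one]
  rcases b with _ | b
  · simp
  · simp [Nat.succ_ne_zero, one_div]

lemma PS_key (jj n : ℕ) :
    ∑ m ∈ Finset.range (n + 1),
      PowerSeries.coeff (R := ℚ) (n - m) ((bernoulliPowerSeries ℚ) ^ (jj + 1)) *
        (((m + 1).factorial : ℚ))⁻¹ =
    PowerSeries.coeff (R := ℚ) n ((bernoulliPowerSeries ℚ) ^ jj) := by
  have h : (bernoulliPowerSeries ℚ) ^ (jj + 1) * (PowerSeries.exp ℚ - 1) =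
      (bernoulliPowerSeries ℚ) ^ jj * PowerSeries.X := by
    rw [pow_succ, mul_assoc, bernoulliPowerSeries_mul_exp_sub_one]
  have h2 := congrArg (PowerSeries.coeff (R := ℚ) (n + 1)) h
  rw [PowerSeries.coeff_succ_mul_X, PowerSeries.coeff_mul,
    Finset.Nat.sum_antidiagonal_eq_sum_range_succ
      (fun a b => PowerSeries.coeff (R := ℚ) a ((bernoulliPowerSeries ℚ) ^ (jj + 1)) *
        PowerSeries.coeff (R := ℚ) b (PowerSeries.exp ℚ - 1)) (n + 1),
    Finset.sum_range_succ] at h2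
  simp only [coeff_exp_sub_one] at h2
  simp only [Nat.sub_self, reduceIte, mul_zero, add_zero] at h2
  rw [← h2]
  rw [← Finset.sum_range_reflect (fun l => PowerSeries.coeff (R := ℚ) l
    ((bernoulliPowerSeries ℚ) ^ (jj + 1)) *
    (if n + 1 - l = 0 then 0 else (((n + 1 - l).factorial : ℚ))⁻¹)) (n + 1)]
  apply Finset.sum_congr rfl
  intro m hm
  rw [Finset.mem_range] at hm
  have h3 : n + 1 - (n + 1 - 1 - m) = m + 1 := by omega
  have h4 : n + 1 - 1 - m = n - m := by omega
  rw [h3, h4, if_neg (Nat.succ_ne_zero m)]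

lemma coef_key (j i : ℕ) (hij : i < j) :
    ∑ j' ∈ Finset.Ico (i + 1) (j + 1),
      bernCoef j j' / (j'.factorial : ℚ) * (j'.choose i : ℚ) =
    bernCoef (j - 1) i / (i.factorial : ℚ) := by
  rw [Finset.sum_Ico_eq_sum_range
    (fun j' => bernCoef j j' / (j'.factorial : ℚ) * (j'.choose i : ℚ)) (i + 1) (j + 1)]
  have hji : j + 1 - (i + 1) = (j - i - 1) + 1 := by omega
  rw [hji]
  have e : ∀ l ∈ Finset.range ((j - i - 1) + 1),
      bernCoef j (i + 1 + l) / (((i + 1 + l).factorial : ℚ)) * (((i + 1 + l).choose i : ℚ)) =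
      PowerSeries.coeff (R := ℚ) ((j - i - 1) - l) ((bernoulliPowerSeries ℚ) ^ (j + 1)) *
        (((l + 1).factorial : ℚ))⁻¹ * ((i.factorial : ℚ))⁻¹ := by
    intro l hl
    have h1 : j - (i + 1 + l) = (j - i - 1) - l := by omega
    have hb : bernCoef j (i + 1 + l) =
        PowerSeries.coeff (R := ℚ) ((j - i - 1) - l) ((bernoulliPowerSeries ℚ) ^ (j + 1)) := by
      rw [bernCoef, h1]
    rw [hb]
    have hch := Nat.choose_mul_factorial_mul_factorial (show i ≤ i + 1 + l by omega)
    have hsub : i + 1 + l - i = l + 1 := by omega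
    rw [hsub] at hch
    have hchq : ((i + 1 + l).choose i : ℚ) * (i.factorial : ℚ) * ((l + 1).factorial : ℚ) =
        ((i + 1 + l).factorial : ℚ) := by exact_mod_cast congrArg (Nat.cast (R := ℚ)) hch
    have hf1 : ((i + 1 + l).factorial : ℚ) ≠ 0 := Nat.cast_ne_zero.mpr (Nat.factorial_ne_zero _)
    have hf2 : ((i.factorial : ℚ)) ≠ 0 := Nat.cast_ne_zero.mpr (Nat.factorial_ne_zero _)
    have hf3 : (((l + 1).factorial : ℚ)) ≠ 0 := Nat.cast_ne_zero.mpr (Nat.factorial_ne_zero _)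
    field_simp
    linear_combination PowerSeries.coeff (R := ℚ) ((j - i - 1) - l) ((bernoulliPowerSeries ℚ) ^ (j + 1)) * hchq
  rw [Finset.sum_congr rfl e, ← Finset.sum_mul, PS_key j (j - i - 1)]
  have h5 : bernCoef (j - 1) i =
      PowerSeries.coeff (R := ℚ) (j - i - 1) ((bernoulliPowerSeries ℚ) ^ j) := by
    have h6 : j - 1 - i = j - i - 1 := by omega
    have h7 : j - 1 + 1 = j := by omega
    rw [bernCoef, h6, h7]
  rw [h5, div_eq_mul_inv]

end BXN
end

/-- `[X₂, N_j] u = -tᵏ · N_{j-1}(R u)` pointwise, for every `j ≥ 1` and smooth `u`. -/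
theorem bracket_X2_N (k : ℕ) (hk : 2 ≤ k) (j : ℕ) (hj : 1 ≤ j)
    (u : ℝ × ℝ × ℝ → ℝ) (hu : ContDiff ℝ (⊤ : ℕ∞) u) (p : ℝ × ℝ × ℝ) :
    X2 k (Nop k j u) p - Nop k j (X2 k u) p = -(p.1 ^ k) * Nop k (j - 1) (Rop u) p := by
  have hk1 : 1 ≤ k := by omega
  have hsm : ∀ i : ℕ, ContDiff ℝ (⊤ : ℕ∞) ((M k)^[i] u) := fun i => BXN.smooth_Mn hu i
  have hX2sum : X2 k (Nop k j u) p = ∑ j' ∈ Finset.range (j + 1),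
      (bernCoef j j' : ℝ) / (Nat.factorial j' : ℝ) * X2 k ((M k)^[j'] u) p := by
    have h1 := BXN.px1_sum (p := p) (s := Finset.range (j + 1)) (f := fun i => (M k)^[i] u)
      (fun i _ => hsm i) (fun i => (bernCoef j i : ℝ) / (Nat.factorial i : ℝ))
    have h2 := BXN.px2_sum (p := p) (s := Finset.range (j + 1)) (f := fun i => (M k)^[i] u)
      (fun i _ => hsm i) (fun i => (bernCoef j i : ℝ) / (Nat.factorial i : ℝ))
    show p.2.1 * px2 (Nop k j u) p - p.2.2 * px1 (Nop k j u) p +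
      p.1 ^ k * (p.2.1 * px1 (Nop k j u) p + p.2.2 * px2 (Nop k j u) p) = _
    rw [show px1 (Nop k j u) p = ∑ i ∈ Finset.range (j + 1),
        (bernCoef j i : ℝ) / (Nat.factorial i : ℝ) * px1 ((M k)^[i] u) p from h1,
      show px2 (Nop k j u) p = ∑ i ∈ Finset.range (j + 1),
        (bernCoef j i : ℝ) / (Nat.factorial i : ℝ) * px2 ((M k)^[i] u) p from h2]
    simp only [Finset.mul_sum, ← Finset.sum_sub_distrib, ← Finset.sum_add_distrib]
    refine Finset.sum_congr rfl fun i _ => ?_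
    simp only [X2, Rop]
    ring
  have hdiff : X2 k (Nop k j u) p - Nop k j (X2 k u) p =
      ∑ j' ∈ Finset.range (j + 1), (bernCoef j j' : ℝ) / (Nat.factorial j' : ℝ) *
        (X2 k ((M k)^[j'] u) p - (M k)^[j'] (X2 k u) p) := by
    rw [hX2sum]
    rw [show Nop k j (X2 k u) p = ∑ j' ∈ Finset.range (j + 1),
        (bernCoef j j' : ℝ) / (Nat.factorial j' : ℝ) * ((M k)^[j'] (X2 k u) p) from rfl,
      ← Finset.sum_sub_distrib]
    exact Finset.sum_congr rfl fun i _ => by ring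
  have hstar : ∀ j' ∈ Finset.range (j + 1),
      (bernCoef j j' : ℝ) / (Nat.factorial j' : ℝ) *
        (X2 k ((M k)^[j'] u) p - (M k)^[j'] (X2 k u) p) =
      -(p.1 ^ k) * ∑ i ∈ Finset.range j',
        (bernCoef j j' : ℝ) / (Nat.factorial j' : ℝ) * (j'.choose i : ℝ) *
          Rop ((M k)^[i] u) p := by
    intro j' _
    have e : X2 k ((M k)^[j'] u) p - (M k)^[j'] (X2 k u) p
        = -(p.1 ^ k) * ∑ i ∈ Finset.range j', (j'.choose i : ℝ) * Rop ((M k)^[i] u) p := by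
      rw [BXN.star hk1 hu j' p]; ring
    rw [e, show (bernCoef j j' : ℝ) / (Nat.factorial j' : ℝ) *
        (-(p.1 ^ k) * ∑ i ∈ Finset.range j', (j'.choose i : ℝ) * Rop ((M k)^[i] u) p)
        = -(p.1 ^ k) * ((bernCoef j j' : ℝ) / (Nat.factorial j' : ℝ) *
          ∑ i ∈ Finset.range j', (j'.choose i : ℝ) * Rop ((M k)^[i] u) p) from by ring]
    congr 1
    rw [Finset.mul_sum]
    exact Finset.sum_congr rfl fun i _ => by ring
  rw [hdiff, Finset.sum_congr rfl hstar, ← Finset.mul_sum]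
  congr 1
  have hswap : ∑ j' ∈ Finset.range (j + 1), ∑ i ∈ Finset.range j',
      (bernCoef j j' : ℝ) / (Nat.factorial j' : ℝ) * (j'.choose i : ℝ) *
        Rop ((M k)^[i] u) p =
      ∑ i ∈ Finset.range (j + 1), ∑ j' ∈ Finset.Ico (i + 1) (j + 1),
      (bernCoef j j' : ℝ) / (Nat.factorial j' : ℝ) * (j'.choose i : ℝ) *
        Rop ((M k)^[i] u) p := by
    have := Finset.sum_Ico_Ico_comm' 0 (j + 1) (fun i j' =>
      (bernCoef j j' : ℝ) / (Nat.factorial j' : ℝ) * (j'.choose i : ℝ) *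
        Rop ((M k)^[i] u) p)
    simpa [Nat.Ico_zero_eq_range] using this.symm
  rw [hswap, Finset.sum_range_succ, Finset.Ico_self, Finset.sum_empty, add_zero]
  have hkey : ∀ i ∈ Finset.range j, ∑ j' ∈ Finset.Ico (i + 1) (j + 1),
      (bernCoef j j' : ℝ) / (Nat.factorial j' : ℝ) * (j'.choose i : ℝ) *
        Rop ((M k)^[i] u) p =
      (bernCoef (j - 1) i : ℝ) / (Nat.factorial i : ℝ) * Rop ((M k)^[i] u) p := by
    intro i hi
    rw [← Finset.sum_mul]
    congr 1
    have hq := BXN.coef_key j i (Finset.mem_range.mp hi)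
    have := congrArg (fun q : ℚ => (q : ℝ)) hq
    push_cast at this
    convert this using 2
  rw [Finset.sum_congr rfl hkey]
  rw [show Nop k (j - 1) (Rop u) p = ∑ i ∈ Finset.range (j - 1 + 1),
      (bernCoef (j - 1) i : ℝ) / (Nat.factorial i : ℝ) * ((M k)^[i] (Rop u) p) from rfl,
    show j - 1 + 1 = j from by omega]
  exact Finset.sum_congr rfl fun i _ => by rw [BXN.MRn hu i]
end

section
/- For every integer p ≥ 0 and every smooth function u : ℝ × ℝ² → ℝ, the localized operator R^p_φ satisfies the commutator identity [X₂, R^p_φ] u = t^k · φ^{(p+1)} · N_p u pointwise on ℝ × ℝ². -/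
namespace BrAux

noncomputable section

abbrev F3 : Type := ℝ × ℝ × ℝ

/-- smoothness -/
def Sm (f : F3 → ℝ) : Prop := ContDiff ℝ ((⊤ : ℕ∞) : WithTop ℕ∞) f

lemma one_le_inf : (1 : WithTop ℕ∞) ≤ ((⊤ : ℕ∞) : WithTop ℕ∞) := by
  norm_cast
lemma two_le_inf : (2 : WithTop ℕ∞) ≤ ((⊤ : ℕ∞) : WithTop ℕ∞) := by
  norm_cast
lemma inf_add_one_le : ((⊤ : ℕ∞) : WithTop ℕ∞) + 1 ≤ ((⊤ : ℕ∞) : WithTop ℕ∞) := by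
  norm_cast

lemma Sm.diff {u : F3 → ℝ} (hu : Sm u) : Differentiable ℝ u :=
  hu.differentiable (ne_of_gt (lt_of_lt_of_le zero_lt_one one_le_inf))

lemma Sm.fderivSm {u : F3 → ℝ} (hu : Sm u) :
    ContDiff ℝ ((⊤ : ℕ∞) : WithTop ℕ∞) (fderiv ℝ u) :=
  hu.fderiv_right inf_add_one_le

/-! ### coordinate derivatives as fderiv -/

lemma hasDerivAt_t {u : F3 → ℝ} (q : F3) (hu : DifferentiableAt ℝ u q) :
    HasDerivAt (fun s => u (s, q.2.1, q.2.2)) (fderiv ℝ u q ((1:ℝ), (0:ℝ), (0:ℝ))) q.1 := by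
  obtain ⟨t, x1, x2⟩ := q
  have hc : HasDerivAt (fun s : ℝ => ((s, x1, x2) : F3)) ((1:ℝ), (0:ℝ), (0:ℝ)) t :=
    (hasDerivAt_id _).prodMk ((hasDerivAt_const _ _).prodMk (hasDerivAt_const _ _))
  exact hu.hasFDerivAt.comp_hasDerivAt t hc

lemma hasDerivAt_x1 {u : F3 → ℝ} (q : F3) (hu : DifferentiableAt ℝ u q) :
    HasDerivAt (fun s => u (q.1, s, q.2.2)) (fderiv ℝ u q ((0:ℝ), (1:ℝ), (0:ℝ))) q.2.1 := by
  obtain ⟨t, x1, x2⟩ := q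
  have hc : HasDerivAt (fun s : ℝ => ((t, s, x2) : F3)) ((0:ℝ), (1:ℝ), (0:ℝ)) x1 :=
    (hasDerivAt_const _ _).prodMk ((hasDerivAt_id _).prodMk (hasDerivAt_const _ _))
  exact hu.hasFDerivAt.comp_hasDerivAt x1 hc

lemma hasDerivAt_x2 {u : F3 → ℝ} (q : F3) (hu : DifferentiableAt ℝ u q) :
    HasDerivAt (fun s => u (q.1, q.2.1, s)) (fderiv ℝ u q ((0:ℝ), (0:ℝ), (1:ℝ))) q.2.2 := by
  obtain ⟨t, x1, x2⟩ := q
  have hc : HasDerivAt (fun s : ℝ => ((t, x1, s) : F3)) ((0:ℝ), (0:ℝ), (1:ℝ)) x2 :=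
    (hasDerivAt_const _ _).prodMk ((hasDerivAt_const _ _).prodMk (hasDerivAt_id _))
  exact hu.hasFDerivAt.comp_hasDerivAt x2 hc

lemma pt_eq {u : F3 → ℝ} (q : F3) (hu : DifferentiableAt ℝ u q) :
    pt u q = fderiv ℝ u q ((1:ℝ), (0:ℝ), (0:ℝ)) := (hasDerivAt_t q hu).deriv

lemma px1_eq {u : F3 → ℝ} (q : F3) (hu : DifferentiableAt ℝ u q) :
    px1 u q = fderiv ℝ u q ((0:ℝ), (1:ℝ), (0:ℝ)) := (hasDerivAt_x1 q hu).deriv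

lemma px2_eq {u : F3 → ℝ} (q : F3) (hu : DifferentiableAt ℝ u q) :
    px2 u q = fderiv ℝ u q ((0:ℝ), (0:ℝ), (1:ℝ)) := (hasDerivAt_x2 q hu).deriv

lemma fderiv_apply_eq {u : F3 → ℝ} (q : F3) (hu : DifferentiableAt ℝ u q) (v : F3) :
    fderiv ℝ u q v = v.1 * pt u q + v.2.1 * px1 u q + v.2.2 * px2 u q := by
  rw [pt_eq q hu, px1_eq q hu, px2_eq q hu]
  have hv : v = v.1 • (((1:ℝ), (0:ℝ), (0:ℝ)) : F3) + v.2.1 • ((0:ℝ), (1:ℝ), (0:ℝ))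
      + v.2.2 • ((0:ℝ), (0:ℝ), (1:ℝ)) := by
    obtain ⟨a, b, c⟩ := v
    simp [Prod.ext_iff]
  conv_lhs => rw [hv]
  simp only [map_add, map_smul, smul_eq_mul]

/-! ### linear vector fields -/

def cT : F3 →L[ℝ] ℝ := ContinuousLinearMap.fst ℝ ℝ (ℝ × ℝ)
def cA : F3 →L[ℝ] ℝ :=
  (ContinuousLinearMap.fst ℝ ℝ ℝ).comp (ContinuousLinearMap.snd ℝ ℝ (ℝ × ℝ))
def cB : F3 →L[ℝ] ℝ :=
  (ContinuousLinearMap.snd ℝ ℝ ℝ).comp (ContinuousLinearMap.snd ℝ ℝ (ℝ × ℝ))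

def LR : F3 →L[ℝ] F3 := (0 : F3 →L[ℝ] ℝ).prod (cA.prod cB)
def LTh : F3 →L[ℝ] F3 := (0 : F3 →L[ℝ] ℝ).prod ((-cB).prod cA)
def LM (k : ℕ) : F3 →L[ℝ] F3 := (((k : ℝ))⁻¹ • cT).prod 0

@[simp] lemma LR_apply (q : F3) : LR q = ((0:ℝ), q.2.1, q.2.2) := by
  simp [LR, cA, cB]
@[simp] lemma LTh_apply (q : F3) : LTh q = ((0:ℝ), -q.2.2, q.2.1) := by
  simp [LTh, cA, cB]
@[simp] lemma LM_apply (k : ℕ) (q : F3) : LM k q = ((k : ℝ)⁻¹ * q.1, (0:ℝ), (0:ℝ)) := by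
  simp [LM, cT]; rfl

/-! ### the operator associated to a linear vector field -/

def Dop (L : F3 →L[ℝ] F3) (u : F3 → ℝ) : F3 → ℝ := fun q => fderiv ℝ u q (L q)

lemma Sm.dop {u : F3 → ℝ} (hu : Sm u) (L : F3 →L[ℝ] F3) : Sm (Dop L u) :=
  hu.fderivSm.clm_apply L.contDiff

lemma hasFDerivAt_dop (L : F3 →L[ℝ] F3) {u : F3 → ℝ} (hu : Sm u) (q : F3) :
    HasFDerivAt (Dop L u)
      ((fderiv ℝ u q).comp L + (fderiv ℝ (fderiv ℝ u) q).flip (L q)) q := by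
  have h1 : HasFDerivAt (fderiv ℝ u) (fderiv ℝ (fderiv ℝ u) q) q :=
    ((hu.fderivSm.differentiable (ne_of_gt (lt_of_lt_of_le zero_lt_one one_le_inf))) q).hasFDerivAt
  exact h1.clm_apply L.hasFDerivAt

lemma dop_dop (L L' : F3 →L[ℝ] F3) {u : F3 → ℝ} (hu : Sm u) (q : F3) :
    Dop L (Dop L' u) q
      = fderiv ℝ u q (L' (L q)) + fderiv ℝ (fderiv ℝ u) q (L q) (L' q) := by
  have h := (hasFDerivAt_dop L' hu q).fderiv
  show fderiv ℝ (Dop L' u) q (L q) = _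
  rw [h]
  simp [ContinuousLinearMap.add_apply, ContinuousLinearMap.comp_apply,
    ContinuousLinearMap.flip_apply]

lemma dop_comm (L L' : F3 →L[ℝ] F3) {u : F3 → ℝ} (hu : Sm u) (q : F3) :
    Dop L (Dop L' u) q - Dop L' (Dop L u) q
      = fderiv ℝ u q (L' (L q)) - fderiv ℝ u q (L (L' q)) := by
  rw [dop_dop L L' hu q, dop_dop L' L hu q]
  have hsym : fderiv ℝ (fderiv ℝ u) q (L q) (L' q)
      = fderiv ℝ (fderiv ℝ u) q (L' q) (L q) :=
    (hu.contDiffAt.isSymmSndFDerivAt (by rw [minSmoothness_of_isRCLikeNormedField]; exact two_le_inf)) _ _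
  rw [hsym]; ring

/-! ### the concrete operators via `Dop` -/

lemma Rop_eq {u : F3 → ℝ} (hu : Sm u) : Rop u = Dop LR u := by
  funext q
  rw [Dop, fderiv_apply_eq q (hu.diff q), LR_apply, Rop]
  dsimp only
  ring

lemma M_eq {k : ℕ} {u : F3 → ℝ} (hu : Sm u) : M k u = Dop (LM k) u := by
  funext q
  rw [Dop, fderiv_apply_eq q (hu.diff q), LM_apply, M]
  dsimp only
  rw [div_eq_inv_mul]
  ring

lemma X2_eq {k : ℕ} {u : F3 → ℝ} (hu : Sm u) :
    X2 k u = fun q => Dop LTh u q + q.1 ^ k * Dop LR u q := by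
  funext q
  rw [Dop, Dop, fderiv_apply_eq q (hu.diff q), fderiv_apply_eq q (hu.diff q),
    LTh_apply, LR_apply, X2, Rop]
  dsimp only
  ring

lemma Sm.rop {u : F3 → ℝ} (hu : Sm u) : Sm (Rop u) := by
  rw [Rop_eq hu]; exact hu.dop LR

lemma Sm.m {k : ℕ} {u : F3 → ℝ} (hu : Sm u) : Sm (M k u) := by
  rw [M_eq hu]; exact hu.dop (LM k)

lemma Sm.x2 {k : ℕ} {u : F3 → ℝ} (hu : Sm u) : Sm (X2 k u) := by
  rw [X2_eq hu]
  exact (hu.dop LTh).add ((contDiff_fst.pow k).mul (hu.dop LR))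

lemma Sm.iterM {k : ℕ} {u : F3 → ℝ} (hu : Sm u) (n : ℕ) : Sm ((M k)^[n] u) := by
  induction n with
  | zero => exact hu
  | succ n ih => rw [Function.iterate_succ_apply']; exact ih.m

lemma Sm.iterR {u : F3 → ℝ} (hu : Sm u) (n : ℕ) : Sm (Rop^[n] u) := by
  induction n with
  | zero => exact hu
  | succ n ih => rw [Function.iterate_succ_apply']; exact ih.rop

/-! ### linearity of Dop -/

lemma dop_add (L : F3 →L[ℝ] F3) {f g : F3 → ℝ} (hf : Sm f) (hg : Sm g) (q : F3) :
    Dop L (fun x => f x + g x) q = Dop L f q + Dop L g q := by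
  rw [Dop, fderiv_fun_add (hf.diff q) (hg.diff q)]
  simp [Dop]

lemma dop_sub (L : F3 →L[ℝ] F3) {f g : F3 → ℝ} (hf : Sm f) (hg : Sm g) (q : F3) :
    Dop L (fun x => f x - g x) q = Dop L f q - Dop L g q := by
  rw [Dop, fderiv_fun_sub (hf.diff q) (hg.diff q)]
  simp [Dop]

lemma dop_sum (L : F3 →L[ℝ] F3) {ι : Type} (s : Finset ι) (f : ι → F3 → ℝ)
    (hf : ∀ i ∈ s, Sm (f i)) (q : F3) :
    Dop L (fun x => ∑ i ∈ s, f i x) q = ∑ i ∈ s, Dop L (f i) q := by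
  rw [Dop, fderiv_fun_sum (fun i hi => (hf i hi).diff q)]
  simp [Dop]

lemma dop_const_mul (L : F3 →L[ℝ] F3) {f : F3 → ℝ} (hf : Sm f) (c : ℝ) (q : F3) :
    Dop L (fun x => c * f x) q = c * Dop L f q := by
  rw [Dop, fderiv_const_mul (hf.diff q)]
  simp [Dop]

lemma dop_mul (L : F3 →L[ℝ] F3) {f g : F3 → ℝ} (hf : Sm f) (hg : Sm g) (q : F3) :
    Dop L (fun x => f x * g x) q = f q * Dop L g q + g q * Dop L f q := by
  rw [Dop, fderiv_fun_mul (hf.diff q) (hg.diff q)]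
  simp [Dop, smul_eq_mul]

/-! ### derivatives of t^n -/

lemma hasFDerivAt_tau (n : ℕ) (q : F3) :
    HasFDerivAt (fun x : F3 => x.1 ^ n) (((n : ℝ) * q.1 ^ (n - 1)) • cT) q :=
  (hasDerivAt_pow n q.1).comp_hasFDerivAt q hasFDerivAt_fst

lemma fderiv_tau_apply (n : ℕ) (q w : F3) :
    fderiv ℝ (fun x : F3 => x.1 ^ n) q w = (n : ℝ) * q.1 ^ (n - 1) * w.1 := by
  rw [(hasFDerivAt_tau n q).fderiv]
  simp [cT]

lemma sm_tau (n : ℕ) : Sm (fun x : F3 => x.1 ^ n) := contDiff_fst.pow n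

/-! ### Dop applied to X2 -/

lemma dop_x2 {k : ℕ} (L : F3 →L[ℝ] F3) {u : F3 → ℝ} (hu : Sm u) (q : F3) :
    Dop L (X2 k u) q = Dop L (Dop LTh u) q
      + (Dop LR u q * ((k : ℝ) * q.1 ^ (k - 1) * (L q).1)
        + q.1 ^ k * Dop L (Dop LR u) q) := by
  rw [X2_eq hu]
  show fderiv ℝ (fun x : F3 => Dop LTh u x + (fun x : F3 => x.1 ^ k * Dop LR u x) x) q (L q) = _
  rw [fderiv_fun_add ((hu.dop LTh).diff q)
    (Sm.diff ((sm_tau k).mul (hu.dop LR)) q)]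
  rw [fderiv_fun_mul ((sm_tau k).diff q) ((hu.dop LR).diff q)]
  simp only [ContinuousLinearMap.add_apply, ContinuousLinearMap.smul_apply, smul_eq_mul,
    fderiv_tau_apply]
  simp only [Dop]
  ring

/-! ### commutators -/

lemma rm_comm {k : ℕ} {u : F3 → ℝ} (hu : Sm u) (q : F3) :
    Rop (M k u) q = M k (Rop u) q := by
  rw [M_eq hu, Rop_eq hu, Rop_eq (hu.dop (LM k)), M_eq (hu.dop LR)]
  have h := dop_comm LR (LM k) hu q
  have h1 : LM k (LR q) = (0 : F3) := by
    rw [LR_apply]; rw [LM_apply]; simp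
  have h2 : LR (LM k q) = (0 : F3) := by
    rw [LM_apply]; rw [LR_apply]; simp
  rw [h1, h2] at h
  simp only [map_zero] at h
  linarith

lemma x2r_comm {k : ℕ} {u : F3 → ℝ} (hu : Sm u) (q : F3) :
    X2 k (Rop u) q = Rop (X2 k u) q := by
  have e1 : X2 k (Rop u) q = Dop LTh (Dop LR u) q + q.1 ^ k * Dop LR (Dop LR u) q := by
    rw [Rop_eq hu, X2_eq (hu.dop LR)]
  have e2 : Rop (X2 k u) q = Dop LR (X2 k u) q := by
    rw [Rop_eq hu.x2]
  rw [e1, e2, dop_x2 LR hu q]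
  have h := dop_comm LTh LR hu q
  have h1 : LR (LTh q) = LTh (LR q) := by
    rw [LTh_apply, LR_apply, LR_apply, LTh_apply]
  rw [h1, sub_self] at h
  have h2 : ((LR q).1 : ℝ) = 0 := by rw [LR_apply]
  rw [h2]
  have h3 : Dop LTh (Dop LR u) q = Dop LR (Dop LTh u) q := by linarith
  rw [h3]
  ring

lemma x2m_comm {k : ℕ} (hk : 2 ≤ k) {u : F3 → ℝ} (hu : Sm u) (q : F3) :
    X2 k (M k u) q = M k (X2 k u) q - q.1 ^ k * Rop u q := by
  have hk0 : (k : ℝ) ≠ 0 := Nat.cast_ne_zero.mpr (by omega)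
  have e1 : X2 k (M k u) q
      = Dop LTh (Dop (LM k) u) q + q.1 ^ k * Dop LR (Dop (LM k) u) q := by
    rw [M_eq hu, X2_eq (hu.dop (LM k))]
  have e2 : M k (X2 k u) q = Dop (LM k) (X2 k u) q := by
    rw [M_eq hu.x2]
  rw [e1, e2, dop_x2 (LM k) hu q, Rop_eq hu]
  have hth : Dop LTh (Dop (LM k) u) q = Dop (LM k) (Dop LTh u) q := by
    have h := dop_comm LTh (LM k) hu q
    have h1 : LM k (LTh q) = (0 : F3) := by
      rw [LTh_apply, LM_apply]; simp
    have h2 : LTh (LM k q) = (0 : F3) := by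
      rw [LM_apply, LTh_apply]; simp
    rw [h1, h2] at h
    simp only [map_zero] at h
    linarith
  have hr : Dop LR (Dop (LM k) u) q = Dop (LM k) (Dop LR u) q := by
    have h := dop_comm LR (LM k) hu q
    have h1 : LM k (LR q) = (0 : F3) := by
      rw [LR_apply, LM_apply]; simp
    have h2 : LR (LM k q) = (0 : F3) := by
      rw [LM_apply, LR_apply]; simp
    rw [h1, h2] at h
    simp only [map_zero] at h
    linarith
  have hlm1 : ((LM k q).1 : ℝ) = (k : ℝ)⁻¹ * q.1 := by rw [LM_apply]
  rw [hth, hr, hlm1]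
  have hpow : (k : ℝ) * q.1 ^ (k - 1) * ((k : ℝ)⁻¹ * q.1) = q.1 ^ k := by
    have : q.1 ^ (k - 1) * q.1 = q.1 ^ k := by
      rw [← pow_succ]
      congr 1
      omega
    field_simp
    rw [mul_comm (q.1 ^ (k-1)) q.1, mul_comm] at *
    nlinarith [this]
  rw [← hpow]
  ring

/-! ### radiality -/

lemma theta_eq {f : F3 → ℝ} (hf : Sm f) (q : F3) :
    q.2.1 * px2 f q - q.2.2 * px1 f q = Dop LTh f q := by
  rw [Dop, fderiv_apply_eq q (hf.diff q), LTh_apply]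
  dsimp only
  ring

lemma rad_rop {f : F3 → ℝ} (hf : Sm f)
    (hrad : ∀ q : F3, q.2.1 * px2 f q - q.2.2 * px1 f q = 0) :
    ∀ q : F3, q.2.1 * px2 (Rop f) q - q.2.2 * px1 (Rop f) q = 0 := by
  intro q
  rw [theta_eq hf.rop q]
  have hz : Dop LTh f = fun _ => (0 : ℝ) := by
    funext x
    rw [← theta_eq hf x, hrad x]
  have hcomm : Dop LTh (Dop LR f) q = Dop LR (Dop LTh f) q := by
    have h := dop_comm LTh LR hf q
    have h1 : LR (LTh q) = LTh (LR q) := by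
      rw [LTh_apply, LR_apply, LR_apply, LTh_apply]
    rw [h1, sub_self] at h
    linarith
  rw [Rop_eq hf, hcomm, hz]
  simp [Dop]

lemma x2_of_rad {k : ℕ} {f : F3 → ℝ}
    (hrad : ∀ q : F3, q.2.1 * px2 f q - q.2.2 * px1 f q = 0) (q : F3) :
    X2 k f q = q.1 ^ k * Rop f q := by
  show q.2.1 * px2 f q - q.2.2 * px1 f q + q.1 ^ k * Rop f q = _
  rw [hrad q]
  ring

/-! ### operator linearity -/

lemma M_add {k : ℕ} {f g : F3 → ℝ} (hf : Sm f) (hg : Sm g) (q : F3) :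
    M k (fun x => f x + g x) q = M k f q + M k g q := by
  rw [M_eq (hf.add hg), dop_add (LM k) hf hg, ← M_eq hf, ← M_eq hg]

lemma M_sub {k : ℕ} {f g : F3 → ℝ} (hf : Sm f) (hg : Sm g) (q : F3) :
    M k (fun x => f x - g x) q = M k f q - M k g q := by
  rw [M_eq (hf.sub hg), dop_sub (LM k) hf hg, ← M_eq hf, ← M_eq hg]

lemma M_const_mul {k : ℕ} {f : F3 → ℝ} (hf : Sm f) (c : ℝ) (q : F3) :
    M k (fun x => c * f x) q = c * M k f q := by
  rw [M_eq (contDiff_const.mul hf), dop_const_mul (LM k) hf c, ← M_eq hf]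

lemma M_tau_mul {k : ℕ} (hk : 2 ≤ k) {v : F3 → ℝ} (hv : Sm v) (q : F3) :
    M k (fun x => x.1 ^ k * v x) q = q.1 ^ k * v q + q.1 ^ k * M k v q := by
  have hk0 : (k : ℝ) ≠ 0 := Nat.cast_ne_zero.mpr (by omega)
  rw [M_eq ((sm_tau k).mul hv), dop_mul (LM k) (sm_tau k) hv q, ← M_eq hv]
  have h1 : Dop (LM k) (fun x : F3 => x.1 ^ k) q = q.1 ^ k := by
    rw [Dop, fderiv_tau_apply, LM_apply]
    have : q.1 ^ (k - 1) * q.1 = q.1 ^ k := by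
      rw [← pow_succ]
      congr 1
      omega
    dsimp only
    field_simp
    nlinarith [this]
  rw [h1]
  ring

lemma X2_sum {k : ℕ} {ι : Type} (s : Finset ι) (f : ι → F3 → ℝ)
    (hf : ∀ i ∈ s, Sm (f i)) (q : F3) :
    X2 k (fun x => ∑ i ∈ s, f i x) q = ∑ i ∈ s, X2 k (f i) q := by
  have hs : Sm (fun x => ∑ i ∈ s, f i x) := ContDiff.sum hf
  rw [X2_eq hs]
  dsimp only
  rw [dop_sum LTh s f hf q, dop_sum LR s f hf q, Finset.mul_sum, ← Finset.sum_add_distrib]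
  refine Finset.sum_congr rfl fun i hi => ?_
  rw [X2_eq (hf i hi)]

lemma X2_const_mul {k : ℕ} {f : F3 → ℝ} (hf : Sm f) (c : ℝ) (q : F3) :
    X2 k (fun x => c * f x) q = c * X2 k f q := by
  rw [X2_eq (contDiff_const.mul hf)]
  dsimp only
  rw [dop_const_mul LTh hf c, dop_const_mul LR hf c, X2_eq hf]
  ring

lemma X2_mul {k : ℕ} {f g : F3 → ℝ} (hf : Sm f) (hg : Sm g) (q : F3) :
    X2 k (fun x => f x * g x) q = X2 k f q * g q + f q * X2 k g q := by
  rw [X2_eq (hf.mul hg)]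
  dsimp only
  rw [dop_mul LTh hf hg q, dop_mul LR hf hg q, X2_eq hf, X2_eq hg]
  ring

/-! ### polynomials acting through M -/

def applyP (k : ℕ) (P : Polynomial ℚ) (u : F3 → ℝ) (q : F3) : ℝ :=
  P.sum fun n a => (a : ℝ) * (M k)^[n] u q

lemma applyP_zero {k : ℕ} {u : F3 → ℝ} (q : F3) : applyP k 0 u q = 0 :=
  Polynomial.sum_zero_index _

lemma applyP_add {k : ℕ} {u : F3 → ℝ} (P Q : Polynomial ℚ) (q : F3) :
    applyP k (P + Q) u q = applyP k P u q + applyP k Q u q :=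
  Polynomial.sum_add_index P Q _ (fun i => by simp) (fun a b₁ b₂ => by push_cast; ring)

lemma applyP_monomial {k : ℕ} {u : F3 → ℝ} (n : ℕ) (a : ℚ) (q : F3) :
    applyP k (Polynomial.monomial n a) u q = (a : ℝ) * (M k)^[n] u q :=
  Polynomial.sum_monomial_index a _ (by simp)

lemma applyP_finsum {k : ℕ} {u : F3 → ℝ} {ι : Type} (s : Finset ι)
    (P : ι → Polynomial ℚ) (q : F3) :
    applyP k (∑ i ∈ s, P i) u q = ∑ i ∈ s, applyP k (P i) u q := by
  classical
  induction s using Finset.induction_on with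
  | empty => simp [applyP_zero]
  | insert a s hni ih =>
    rw [Finset.sum_insert hni, Finset.sum_insert hni, applyP_add, ih]

lemma applyP_C_mul {k : ℕ} {u : F3 → ℝ} (c : ℚ) (P : Polynomial ℚ) (q : F3) :
    applyP k (Polynomial.C c * P) u q = (c : ℝ) * applyP k P u q := by
  rw [← Polynomial.smul_eq_C_mul]
  rw [applyP, Polynomial.sum_smul_index _ _ _ (fun i => by simp)]
  rw [applyP, Polynomial.sum_def, Polynomial.sum_def, Finset.mul_sum]
  refine Finset.sum_congr rfl fun n hn => ?_
  push_cast
  ring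

lemma sm_applyP {k : ℕ} {u : F3 → ℝ} (hu : Sm u) (P : Polynomial ℚ) :
    Sm (fun q => applyP k P u q) := by
  unfold applyP Polynomial.sum
  exact ContDiff.sum fun i _ => contDiff_const.mul (hu.iterM i)

lemma applyP_X_mul {k : ℕ} {u : F3 → ℝ} (hu : Sm u) (P : Polynomial ℚ) (q : F3) :
    applyP k (Polynomial.X * P) u q = M k (fun x => applyP k P u x) q := by
  induction P using Polynomial.induction_on' generalizing q with
  | add p r hp hr =>
    rw [mul_add, applyP_add]
    have hfe : (fun x => applyP k (p + r) u x)
        = fun x => applyP k p u x + applyP k r u x := by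
      funext x; rw [applyP_add]
    rw [hfe, M_add (sm_applyP hu p) (sm_applyP hu r) q, hp q, hr q]
  | monomial n a =>
    have hm : Polynomial.X * Polynomial.monomial n a = Polynomial.monomial (n + 1) a := by
      rw [← Polynomial.monomial_one_one_eq_X, Polynomial.monomial_mul_monomial, one_mul,
        add_comm]
    rw [hm, applyP_monomial]
    have hfe : (fun x => applyP k (Polynomial.monomial n a) u x)
        = fun x => (a : ℝ) * (M k)^[n] u x := by
      funext x; rw [applyP_monomial]
    rw [hfe, M_const_mul (hu.iterM n) _ q, Function.iterate_succ_apply']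

/-! ### iterated commutators -/

lemma rop_iterM {k : ℕ} {u : F3 → ℝ} (hu : Sm u) (n : ℕ) :
    Rop ((M k)^[n] u) = (M k)^[n] (Rop u) := by
  induction n with
  | zero => rfl
  | succ n ih =>
    rw [Function.iterate_succ_apply', Function.iterate_succ_apply', ← ih]
    funext q
    exact rm_comm (hu.iterM n) q

lemma x2_iterR {k : ℕ} {u : F3 → ℝ} (hu : Sm u) (m : ℕ) :
    Rop^[m] (X2 k u) = X2 k (Rop^[m] u) := by
  induction m with
  | zero => rfl
  | succ m ih =>
    rw [Function.iterate_succ_apply', Function.iterate_succ_apply', ih]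
    funext q
    exact (x2r_comm (hu.iterR m) q).symm

def Gpoly : ℕ → Polynomial ℚ
  | 0 => 0
  | n + 1 => Polynomial.X ^ n + (1 + Polynomial.X) * Gpoly n

lemma Gpoly_eq (n : ℕ) : Gpoly n = (1 + Polynomial.X) ^ n - Polynomial.X ^ n := by
  induction n with
  | zero => simp [Gpoly]
  | succ n ih =>
    rw [Gpoly, ih]
    ring

lemma x2_iterM {k : ℕ} (hk : 2 ≤ k) {w : F3 → ℝ} (hw : Sm w) (n : ℕ) (q : F3) :
    X2 k ((M k)^[n] w) q
      = (M k)^[n] (X2 k w) q - q.1 ^ k * applyP k (Gpoly n) (Rop w) q := by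
  induction n generalizing q with
  | zero => simp [Gpoly, applyP_zero]
  | succ n ih =>
    rw [Function.iterate_succ_apply', x2m_comm hk (hw.iterM n) q]
    have hfe : X2 k ((M k)^[n] w)
        = fun x => (M k)^[n] (X2 k w) x
            - x.1 ^ k * applyP k (Gpoly n) (Rop w) x := by
      funext x; exact ih x
    rw [hfe]
    have hsm1 : Sm ((M k)^[n] (X2 k w)) := (hw.x2).iterM n
    have hsm2 : Sm (fun x : F3 => x.1 ^ k * applyP k (Gpoly n) (Rop w) x) :=
      (sm_tau k).mul (sm_applyP hw.rop _)
    rw [M_sub hsm1 hsm2 q, M_tau_mul hk (sm_applyP hw.rop _) q]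
    have hG : Gpoly (n + 1) = Polynomial.monomial n 1 + (Gpoly n + Polynomial.X * Gpoly n) := by
      rw [Gpoly, ← Polynomial.X_pow_eq_monomial]
      ring
    rw [hG, applyP_add, applyP_add, applyP_monomial, applyP_X_mul hw.rop]
    have hrm : Rop ((M k)^[n] w) q = (M k)^[n] (Rop w) q := by
      rw [rop_iterM hw n]
    rw [hrm, Function.iterate_succ_apply']
    ring

def GnS (j : ℕ) : Polynomial ℚ :=
  ∑ j' ∈ Finset.range (j + 1),
    Polynomial.C (bernCoef j j' / (Nat.factorial j' : ℚ)) * Gpoly j'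

def Pn (j : ℕ) : Polynomial ℚ :=
  ∑ j' ∈ Finset.range (j + 1),
    Polynomial.monomial j' (bernCoef j j' / (Nat.factorial j' : ℚ))

lemma nop_eq_applyP {k j : ℕ} {v : F3 → ℝ} (q : F3) :
    Nop k j v q = applyP k (Pn j) v q := by
  rw [Nop, Pn, applyP_finsum]
  refine Finset.sum_congr rfl fun j' _ => ?_
  rw [applyP_monomial]
  push_cast
  ring

lemma x2_nop {k : ℕ} (hk : 2 ≤ k) {w : F3 → ℝ} (hw : Sm w) (j : ℕ) (q : F3) :
    X2 k (Nop k j w) q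
      = Nop k j (X2 k w) q - q.1 ^ k * applyP k (GnS j) (Rop w) q := by
  have hNop : Nop k j w = fun x => ∑ j' ∈ Finset.range (j + 1),
      ((bernCoef j j' : ℝ) / (Nat.factorial j' : ℝ)) * ((M k)^[j'] w x) := rfl
  rw [hNop, X2_sum _ _ (fun i _ => contDiff_const.mul (hw.iterM i)) q]
  have hterm : ∀ j' ∈ Finset.range (j + 1),
      X2 k (fun x => ((bernCoef j j' : ℝ) / (Nat.factorial j' : ℝ)) * ((M k)^[j'] w x)) q
        = ((bernCoef j j' : ℝ) / (Nat.factorial j' : ℝ)) * ((M k)^[j'] (X2 k w) q)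
          - q.1 ^ k * (((bernCoef j j' / (Nat.factorial j' : ℚ) : ℚ)) : ℝ)
            * applyP k (Gpoly j') (Rop w) q := by
    intro j' _
    rw [X2_const_mul (hw.iterM j') _ q, x2_iterM hk hw j' q]
    push_cast
    ring
  rw [Finset.sum_congr rfl hterm, Finset.sum_sub_distrib]
  congr 1
  rw [GnS, applyP_finsum, Finset.mul_sum]
  refine Finset.sum_congr rfl fun j' _ => ?_
  rw [applyP_C_mul]
  ring

/-! ### the Bernoulli identity -/

lemma bern_map : bernoulliPowerSeries (Polynomial ℚ)
    = PowerSeries.map (algebraMap ℚ (Polynomial ℚ)) (bernoulliPowerSeries ℚ) := by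
  ext n
  simp [bernoulliPowerSeries, PowerSeries.coeff_mk, PowerSeries.coeff_map]

lemma coeff_bern_pow (m i : ℕ) :
    PowerSeries.coeff (R := Polynomial ℚ) i (bernoulliPowerSeries (Polynomial ℚ) ^ m)
      = Polynomial.C (PowerSeries.coeff (R := ℚ) i (bernoulliPowerSeries ℚ ^ m)) := by
  rw [bern_map, ← map_pow, PowerSeries.coeff_map, Polynomial.algebraMap_eq]

lemma coeff_resc_exp (c : Polynomial ℚ) (j' : ℕ) :
    PowerSeries.coeff (R := Polynomial ℚ) j'
        (PowerSeries.rescale c (PowerSeries.exp (Polynomial ℚ)))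
      = c ^ j' * Polynomial.C (1 / (Nat.factorial j' : ℚ)) := by
  rw [PowerSeries.coeff_rescale, PowerSeries.coeff_exp, Polynomial.algebraMap_eq]

lemma coeff_mul_resc (m n : ℕ) (c : Polynomial ℚ) :
    PowerSeries.coeff (R := Polynomial ℚ) n
        (PowerSeries.rescale c (PowerSeries.exp (Polynomial ℚ))
          * bernoulliPowerSeries (Polynomial ℚ) ^ m)
      = ∑ j' ∈ Finset.range (n + 1),
          Polynomial.C
              (PowerSeries.coeff (R := ℚ) (n - j') (bernoulliPowerSeries ℚ ^ m)
                / (Nat.factorial j' : ℚ)) * c ^ j' := by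
  rw [PowerSeries.coeff_mul, Finset.Nat.sum_antidiagonal_eq_sum_range_succ_mk]
  refine Finset.sum_congr rfl fun j' _ => ?_
  rw [coeff_resc_exp, coeff_bern_pow]
  conv_rhs => rw [div_eq_mul_one_div, map_mul]
  ring

lemma key_identity (j : ℕ) : GnS (j + 1) = Pn j := by
  classical
  have h1 : PowerSeries.rescale (1 + Polynomial.X) (PowerSeries.exp (Polynomial ℚ))
      = PowerSeries.rescale Polynomial.X (PowerSeries.exp (Polynomial ℚ))
        * PowerSeries.exp (Polynomial ℚ) := by
    have h := PowerSeries.exp_mul_exp_eq_exp_add (Polynomial.X) (1 : Polynomial ℚ)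
    rw [PowerSeries.rescale_one] at h
    rw [add_comm]
    exact h.symm.trans (by rw [RingHom.id_apply])
  have h2 : bernoulliPowerSeries (Polynomial ℚ) ^ (j + 2)
        * (PowerSeries.rescale (1 + Polynomial.X) (PowerSeries.exp (Polynomial ℚ))
          - PowerSeries.rescale Polynomial.X (PowerSeries.exp (Polynomial ℚ)))
      = PowerSeries.X
        * (PowerSeries.rescale Polynomial.X (PowerSeries.exp (Polynomial ℚ))
          * bernoulliPowerSeries (Polynomial ℚ) ^ (j + 1)) := by
    rw [h1]
    have h3 : bernoulliPowerSeries (Polynomial ℚ) * (PowerSeries.exp (Polynomial ℚ) - 1)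
        = PowerSeries.X := bernoulliPowerSeries_mul_exp_sub_one (Polynomial ℚ)
    calc bernoulliPowerSeries (Polynomial ℚ) ^ (j + 2)
          * (PowerSeries.rescale Polynomial.X (PowerSeries.exp (Polynomial ℚ))
              * PowerSeries.exp (Polynomial ℚ)
            - PowerSeries.rescale Polynomial.X (PowerSeries.exp (Polynomial ℚ)))
        = (bernoulliPowerSeries (Polynomial ℚ) * (PowerSeries.exp (Polynomial ℚ) - 1))
          * (PowerSeries.rescale Polynomial.X (PowerSeries.exp (Polynomial ℚ))
            * bernoulliPowerSeries (Polynomial ℚ) ^ (j + 1)) := by ring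
      _ = _ := by rw [h3]
  have h4 := congrArg (PowerSeries.coeff (R := Polynomial ℚ) (j + 1)) h2
  rw [PowerSeries.coeff_succ_X_mul] at h4
  have hL : bernoulliPowerSeries (Polynomial ℚ) ^ (j + 2)
        * (PowerSeries.rescale (1 + Polynomial.X) (PowerSeries.exp (Polynomial ℚ))
          - PowerSeries.rescale Polynomial.X (PowerSeries.exp (Polynomial ℚ)))
      = PowerSeries.rescale (1 + Polynomial.X) (PowerSeries.exp (Polynomial ℚ))
          * bernoulliPowerSeries (Polynomial ℚ) ^ (j + 2)
        - PowerSeries.rescale Polynomial.X (PowerSeries.exp (Polynomial ℚ))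
          * bernoulliPowerSeries (Polynomial ℚ) ^ (j + 2) := by ring
  rw [hL, map_sub, coeff_mul_resc, coeff_mul_resc, coeff_mul_resc] at h4
  have hGnS : GnS (j + 1)
      = ∑ j' ∈ Finset.range (j + 2),
          Polynomial.C (bernCoef (j + 1) j' / (Nat.factorial j' : ℚ))
            * (1 + Polynomial.X) ^ j'
        - ∑ j' ∈ Finset.range (j + 2),
          Polynomial.C (bernCoef (j + 1) j' / (Nat.factorial j' : ℚ))
            * Polynomial.X ^ j' := by
    rw [GnS, ← Finset.sum_sub_distrib]
    refine Finset.sum_congr rfl fun j' _ => ?_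
    rw [Gpoly_eq]
    ring
  rw [hGnS]
  have hPn : Pn j = ∑ j' ∈ Finset.range (j + 1),
      Polynomial.C (bernCoef j j' / (Nat.factorial j' : ℚ)) * Polynomial.X ^ j' := by
    rw [Pn]
    refine Finset.sum_congr rfl fun j' _ => ?_
    rw [Polynomial.C_mul_X_pow_eq_monomial]
  rw [hPn]
  have hb1 : ∀ j' : ℕ, bernCoef (j + 1) j'
      = PowerSeries.coeff (R := ℚ) (j + 1 - j') (bernoulliPowerSeries ℚ ^ (j + 2)) := fun j' => rfl
  have hb2 : ∀ j' : ℕ, bernCoef j j'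
      = PowerSeries.coeff (R := ℚ) (j - j') (bernoulliPowerSeries ℚ ^ (j + 1)) := fun j' => rfl
  simp only [hb1, hb2]
  exact h4

end

end BrAux

/-- The localized operator `R^p_φ u = Σ_{j=0}^{p} φ^{(j)} · N_j(R^{p-j} u)`, where
`φ^{(j)} = R^j φ`. -/
noncomputable def RpLoc (k p : ℕ) (φ u : ℝ × ℝ × ℝ → ℝ) : ℝ × ℝ × ℝ → ℝ :=
  fun q => ∑ j ∈ Finset.range (p + 1), (Rop^[j] φ q) * (Nop k j (Rop^[p - j] u) q)

/-- For `φ` smooth, independent of `t` and radial (i.e. `x₁∂_{x₂}φ - x₂∂_{x₁}φ = 0`),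
one has `[X₂, R^p_φ] u = tᵏ · φ^{(p+1)} · N_p u` pointwise for smooth `u`. -/
theorem bracket_X2_RpLoc (k : ℕ) (hk : 2 ≤ k) (φ : ℝ × ℝ × ℝ → ℝ)
    (hφ : ContDiff ℝ (⊤ : ℕ∞) φ)
    (hconst : ∀ t t' x₁ x₂ : ℝ, φ (t, x₁, x₂) = φ (t', x₁, x₂))
    (hrad : ∀ q : ℝ × ℝ × ℝ, q.2.1 * px2 φ q - q.2.2 * px1 φ q = 0)
    (p : ℕ) (u : ℝ × ℝ × ℝ → ℝ) (hu : ContDiff ℝ (⊤ : ℕ∞) u) (q : ℝ × ℝ × ℝ) :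
    X2 k (RpLoc k p φ u) q - RpLoc k p φ (X2 k u) q
      = q.1 ^ k * (Rop^[p + 1] φ q) * Nop k p u q := by
  have hφs : BrAux.Sm φ := hφ.of_le (by simp)
  have hus : BrAux.Sm u := hu.of_le (by simp)
  have hψ : ∀ j : ℕ, BrAux.Sm (Rop^[j] φ) := fun j => hφs.iterR j
  have hws : ∀ j : ℕ, BrAux.Sm (Rop^[p - j] u) := fun j => hus.iterR (p - j)
  have hNsm : ∀ j m : ℕ, BrAux.Sm (Nop k j (Rop^[m] u)) := fun j m =>
    ContDiff.sum fun i _ => contDiff_const.mul ((hus.iterR m).iterM i)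
  have hradψ : ∀ j : ℕ, ∀ r : ℝ × ℝ × ℝ,
      r.2.1 * px2 (Rop^[j] φ) r - r.2.2 * px1 (Rop^[j] φ) r = 0 := by
    intro j
    induction j with
    | zero => exact hrad
    | succ j ih =>
      intro r
      rw [Function.iterate_succ_apply']
      exact BrAux.rad_rop (hψ j) ih r
  have hstep : ∀ j ∈ Finset.range (p + 1),
      X2 k (fun x => Rop^[j] φ x * Nop k j (Rop^[p - j] u) x) q
          - Rop^[j] φ q * Nop k j (X2 k (Rop^[p - j] u)) q
        = q.1 ^ k * Rop^[j + 1] φ q * Nop k j (Rop^[p - j] u) q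
          - Rop^[j] φ q
            * (q.1 ^ k * BrAux.applyP k (BrAux.GnS j) (Rop (Rop^[p - j] u)) q) := by
    intro j _
    rw [BrAux.X2_mul (hψ j) (hNsm j (p - j)) q, BrAux.x2_of_rad (hradψ j) q,
      BrAux.x2_nop hk (hws j) j q, ← Function.iterate_succ_apply' Rop j φ]
    ring
  have hmain : X2 k (RpLoc k p φ u) q - RpLoc k p φ (X2 k u) q
      = ∑ j ∈ Finset.range (p + 1),
          (q.1 ^ k * Rop^[j + 1] φ q * Nop k j (Rop^[p - j] u) q
            - Rop^[j] φ q
              * (q.1 ^ k * BrAux.applyP k (BrAux.GnS j) (Rop (Rop^[p - j] u)) q)) := by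
    have e1 : X2 k (RpLoc k p φ u) q
        = ∑ j ∈ Finset.range (p + 1),
            X2 k (fun x => Rop^[j] φ x * Nop k j (Rop^[p - j] u) x) q := by
      rw [show RpLoc k p φ u
          = (fun x => ∑ j ∈ Finset.range (p + 1),
              Rop^[j] φ x * Nop k j (Rop^[p - j] u) x) from rfl]
      exact BrAux.X2_sum (Finset.range (p + 1)) _
        (fun j _ => (hψ j).mul (hNsm j (p - j))) q
    have e2 : RpLoc k p φ (X2 k u) q
        = ∑ j ∈ Finset.range (p + 1),
            Rop^[j] φ q * Nop k j (X2 k (Rop^[p - j] u)) q := by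
      show (∑ j ∈ Finset.range (p + 1),
          Rop^[j] φ q * Nop k j (Rop^[p - j] (X2 k u)) q) = _
      refine Finset.sum_congr rfl fun j _ => ?_
      rw [BrAux.x2_iterR hus (p - j)]
    rw [e1, e2, ← Finset.sum_sub_distrib]
    exact Finset.sum_congr rfl hstep
  rw [hmain, Finset.sum_sub_distrib]
  rw [Finset.sum_range_succ
    (fun j => q.1 ^ k * Rop^[j + 1] φ q * Nop k j (Rop^[p - j] u) q)]
  rw [Finset.sum_range_succ'
    (fun j => Rop^[j] φ q
      * (q.1 ^ k * BrAux.applyP k (BrAux.GnS j) (Rop (Rop^[p - j] u)) q))]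
  have hB0 : Rop^[0] φ q
      * (q.1 ^ k * BrAux.applyP k (BrAux.GnS 0) (Rop (Rop^[p - 0] u)) q) = 0 := by
    have hg : BrAux.GnS 0 = 0 := by
      rw [BrAux.GnS]
      simp [BrAux.Gpoly]
    rw [hg, BrAux.applyP_zero]
    ring
  have hAB : ∀ i ∈ Finset.range p,
      q.1 ^ k * Rop^[i + 1] φ q * Nop k i (Rop^[p - i] u) q
        = Rop^[i + 1] φ q
          * (q.1 ^ k * BrAux.applyP k (BrAux.GnS (i + 1)) (Rop (Rop^[p - (i + 1)] u)) q) := by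
    intro i hi
    have hil : i < p := Finset.mem_range.mp hi
    have hR : Rop (Rop^[p - (i + 1)] u) = Rop^[p - i] u := by
      rw [← Function.iterate_succ_apply' Rop (p - (i + 1)) u]
      have hpi : (p - (i + 1)).succ = p - i := by omega
      rw [hpi]
    rw [hR, BrAux.key_identity i, ← BrAux.nop_eq_applyP]
    ring
  rw [Finset.sum_congr rfl hAB, hB0]
  have hfin : Rop^[p - p] u = u := by
    rw [Nat.sub_self]
    rfl
  rw [hfin]
  ring
end
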